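/- Fix an integer N ≥ 1, an amplitude bound a > 0, a rate bound r with 0 < r ≤ 2a, and a previous input u₋₁ ∈ ℝ with |u₋₁| ≤ a. Define a⁰_min = max(−a, u₋₁ − r), a⁰_max = min(a, u₋₁ + r), U_1 = {u ∈ ℝ^{N+1} : a⁰_min ≤ u_0 ≤ a⁰_max, |u_1| ≤ a, |u_1 − u_0| ≤ r}, and for 2 ≤ k ≤ N, U_k = {u ∈ ℝ^{N+1} : |u_{k−1}| ≤ a, |u_k| ≤ a, |u_k − u_{k−1}| ≤ r}. Let U_o be the intersection of the U_k with odd k and U_e the intersection of the U_k with even k. Then for any v° ∈ ℝ^{N+1}, the Dykstra iterates x_0 = v°, μ_0 = γ_0 = 0, y_i = P_{U_e}(x_i + μ_i), μ_{i+1} = μ_i + x_i − y_i, x_{i+1} = P_{U_o}(y_i + γ_i), γ_{i+1} = γ_i + y_i − x_{i+1} converge to P_U(v°), the Euclidean projection of v° onto the input rate and amplitude constraint set U. -/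

import Mathlib

open Filter Topology

/-- `p` is the Euclidean projection of `z` onto `C`. -/
def IsProj {n : ℕ} (C : Set (EuclideanSpace ℝ (Fin n)))
    (z p : EuclideanSpace ℝ (Fin n)) : Prop :=
  p ∈ C ∧ ∀ w ∈ C, dist z p ≤ dist z w

/-- The input rate and amplitude constraint set. -/
def rateAmpSet (N : ℕ) (a r uprev : ℝ) : Set (EuclideanSpace ℝ (Fin (N + 1))) :=
  {u | (∀ k, |u k| ≤ a) ∧ |u 0 - uprev| ≤ r ∧
    ∀ k : Fin N, |u k.succ - u k.castSucc| ≤ r}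

/-- The set `U_1 = {u : a⁰_min ≤ u_0 ≤ a⁰_max, |u_1| ≤ a, |u_1 - u_0| ≤ r}` with
`a⁰_min = max(−a, u₋₁ − r)` and `a⁰_max = min(a, u₋₁ + r)`. -/
def U1set (N : ℕ) (hN : 1 ≤ N) (a r uprev : ℝ) : Set (EuclideanSpace ℝ (Fin (N + 1))) :=
  {u | max (-a) (uprev - r) ≤ u 0 ∧ u 0 ≤ min a (uprev + r) ∧
    |u ⟨1, by omega⟩| ≤ a ∧ |u ⟨1, by omega⟩ - u 0| ≤ r}

/-- For `2 ≤ k ≤ N`, the set `U_k = {u : |u_{k−1}| ≤ a, |u_k| ≤ a, |u_k − u_{k−1}| ≤ r}`. -/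
def pairSet (N : ℕ) (a r : ℝ) (k : ℕ) (h1 : 1 ≤ k) (h2 : k ≤ N) :
    Set (EuclideanSpace ℝ (Fin (N + 1))) :=
  {u | |u ⟨k - 1, by omega⟩| ≤ a ∧ |u ⟨k, by omega⟩| ≤ a ∧
    |u ⟨k, by omega⟩ - u ⟨k - 1, by omega⟩| ≤ r}

/-- `U_e`: intersection of the sets `U_k` with even `k`, `2 ≤ k ≤ N`. -/
def evenInter (N : ℕ) (a r : ℝ) : Set (EuclideanSpace ℝ (Fin (N + 1))) :=
  ⋂ (k : ℕ) (h : Even k ∧ 2 ≤ k ∧ k ≤ N), pairSet N a r k (by omega) h.2.2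

/-- `U_o`: intersection of the sets `U_k` with odd `k`, `1 ≤ k ≤ N` (where `U_1` is the
special first set). -/
def oddInter (N : ℕ) (hN : 1 ≤ N) (a r uprev : ℝ) :
    Set (EuclideanSpace ℝ (Fin (N + 1))) :=
  U1set N hN a r uprev ∩
    ⋂ (k : ℕ) (h : Odd k ∧ 2 ≤ k ∧ k ≤ N), pairSet N a r k (by omega) h.2.2

/-!
Dykstra's algorithm converges for any two closed convex sets `A`, `B` of a finite-dimensional
real inner product space (Boyle–Dykstra); the theorem is the instance `A = U_e`, `B = U_o`.

For `w ∈ A ∩ B` the energy `‖x_{i+1} - w‖² + 2⟪μ_{i+1}, y_i - w⟫ + 2⟪γ_{i+1}, x_{i+1} - w⟫`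
dominates `‖x_{i+1} - w‖²` and decreases at least by the squared step lengths
`‖x_i - y_i‖² + ‖y_i - x_{i+1}‖²`, which are therefore summable. Hence `‖μ_i‖² = O(i)`, and
along indices where `i` times the step length tends to `0`, and a further subsequence on which
`x_{i+1} → z ∈ A ∩ B`, the identity `μ_{i+1} + γ_{i+1} = x_0 - x_{i+1}` shows that the energy
for `w = P_{A ∩ B}(x_0)` tends to `2⟪x_0 - w, z - w⟫ - ‖z - w‖² ≤ 0`. The energy is
nonincreasing and nonnegative, so it tends to `0`, and this forces `x_i → w` and `y_i → w`.
-/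

open scoped RealInnerProductSpace

theorem Summable.frequently_natCast_succ_mul_lt {b : ℕ → ℝ} (hb : Summable b) {ε : ℝ}
    (hε : 0 < ε) : ∃ᶠ n : ℕ in atTop, ((n : ℝ) + 1) * b n < ε := by
  by_contra hcon
  simp only [not_frequently, not_lt] at hcon
  refine Real.not_summable_natCast_inv ((summable_nat_add_iff 1).1 ?_)
  refine Summable.of_norm_bounded_eventually_nat (hb.mul_left ε⁻¹) ?_
  filter_upwards [hcon] with n hn
  have hn1 : (0 : ℝ) < n + 1 := by positivity
  rw [Real.norm_of_nonneg (by positivity), Nat.cast_add_one, inv_le_iff_one_le_mul₀ hn1]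
  calc (1 : ℝ) = ε⁻¹ * ε := (inv_mul_cancel₀ hε.ne').symm
    _ ≤ ε⁻¹ * ((n + 1) * b n) := by gcongr
    _ = ε⁻¹ * b n * (n + 1) := by ring

theorem Summable.exists_strictMono_tendsto_natCast_succ_mul {b : ℕ → ℝ} (hb : Summable b)
    (hb0 : ∀ n, 0 ≤ b n) :
    ∃ φ : ℕ → ℕ, StrictMono φ ∧ Tendsto (fun j => ((φ j : ℝ) + 1) * b (φ j)) atTop (𝓝 0) := by
  obtain ⟨φ, hφ, hlt⟩ := extraction_forall_of_frequently fun j : ℕ =>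
    hb.frequently_natCast_succ_mul_lt (Nat.one_div_pos_of_nat (n := j))
  refine ⟨φ, hφ, squeeze_zero (fun j => mul_nonneg (by positivity) (hb0 _))
    (fun j => (hlt j).le) tendsto_one_div_add_atTop_nhds_zero_nat⟩

theorem tendsto_zero_of_sq_norm_le {E : Type*} [SeminormedAddCommGroup E] {f : ℕ → E}
    {g : ℕ → ℝ} (hg : Tendsto g atTop (𝓝 0)) (hfg : ∀ i, ‖f i‖ ^ 2 ≤ g i) :
    Tendsto f atTop (𝓝 0) := by
  have hsq : Tendsto (fun i => ‖f i‖ ^ 2) atTop (𝓝 0) :=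
    squeeze_zero (fun i => sq_nonneg _) hfg hg
  simpa [tendsto_zero_iff_norm_tendsto_zero, Real.sqrt_sq (norm_nonneg _)] using hsq.sqrt

section Dykstra

variable {E : Type*} [NormedAddCommGroup E]

def dykstraMove (x y : ℕ → E) (i : ℕ) : ℝ :=
  ‖x i - y i‖ ^ 2 + ‖y i - x (i + 1)‖ ^ 2

theorem dykstraMove_nonneg (x y : ℕ → E) (i : ℕ) : 0 ≤ dykstraMove x y i := by
  unfold dykstraMove; positivity

variable [InnerProductSpace ℝ E]

/-- The obtuse-angle criterion for `p` to be the nearest point of `C` to `z`; for convex `C` it is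
equivalent to `IsProj` (see `IsProj.isObtuseProj`). -/
def IsObtuseProj (C : Set E) (z p : E) : Prop :=
  p ∈ C ∧ ∀ v ∈ C, ⟪z - p, v - p⟫ ≤ 0

structure IsDykstraSeq (A B : Set E) (x y μ γ : ℕ → E) : Prop where
  μ_zero : μ 0 = 0
  γ_zero : γ 0 = 0
  proj_left : ∀ i, IsObtuseProj A (x i + μ i) (y i)
  proj_right : ∀ i, IsObtuseProj B (y i + γ i) (x (i + 1))
  μ_succ : ∀ i, μ (i + 1) = μ i + x i - y i
  γ_succ : ∀ i, γ (i + 1) = γ i + y i - x (i + 1)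

def dykstraEnergy (x y μ γ : ℕ → E) (w : E) (i : ℕ) : ℝ :=
  ‖x (i + 1) - w‖ ^ 2 + 2 * ⟪μ (i + 1), y i - w⟫ + 2 * ⟪γ (i + 1), x (i + 1) - w⟫

theorem dykstra_energy_identity (x y x' y' μ γ w : E) :
    ‖x - w‖ ^ 2 + 2 * ⟪μ, y' - w⟫ + 2 * ⟪γ, x - w⟫
      = ‖x' - w‖ ^ 2 + 2 * ⟪μ + x - y, y - w⟫ + 2 * ⟪γ + y - x', x' - w⟫
        + (‖x - y‖ ^ 2 + ‖y - x'‖ ^ 2) + 2 * (⟪μ, y' - y⟫ + ⟪γ, x - x'⟫) := by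
  simp only [← real_inner_self_eq_norm_sq, inner_add_left, inner_sub_left, inner_sub_right,
    real_inner_comm]
  ring

namespace IsDykstraSeq

variable {A B : Set E} {x y μ γ : ℕ → E} {w : E}

theorem inner_μ_succ_nonpos (h : IsDykstraSeq A B x y μ γ) (i : ℕ) {v : E} (hv : v ∈ A) :
    ⟪μ (i + 1), v - y i⟫ ≤ 0 := by
  simpa only [h.μ_succ, add_sub_right_comm, add_comm (x i)] using (h.proj_left i).2 v hv

theorem inner_γ_succ_nonpos (h : IsDykstraSeq A B x y μ γ) (i : ℕ) {v : E} (hv : v ∈ B) :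
    ⟪γ (i + 1), v - x (i + 1)⟫ ≤ 0 := by
  simpa only [h.γ_succ, add_sub_right_comm, add_comm (y i)] using (h.proj_right i).2 v hv

theorem μ_eq_sum (h : IsDykstraSeq A B x y μ γ) (n : ℕ) :
    μ n = ∑ j ∈ Finset.range n, (x j - y j) := by
  induction n with
  | zero => simp [h.μ_zero]
  | succ n ih => rw [h.μ_succ, Finset.sum_range_succ, ih, add_sub_assoc]

theorem μ_add_γ (h : IsDykstraSeq A B x y μ γ) (i : ℕ) :
    μ (i + 1) + γ (i + 1) = x 0 - x (i + 1) := by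
  induction i with
  | zero => rw [h.μ_succ, h.γ_succ, h.μ_zero, h.γ_zero]; abel
  | succ i ih =>
    rw [eq_sub_iff_add_eq] at ih ⊢
    rw [h.μ_succ, h.γ_succ, ← ih]
    abel

theorem energy_zero_add_move (h : IsDykstraSeq A B x y μ γ) (w : E) :
    dykstraEnergy x y μ γ w 0 + dykstraMove x y 0 = ‖x 0 - w‖ ^ 2 := by
  have := dykstra_energy_identity (x 0) (y 0) (x 1) (y 0) 0 0 w
  simp only [inner_zero_left, mul_zero, add_zero, zero_add] at this
  rw [this, dykstraEnergy, dykstraMove, h.μ_succ, h.γ_succ, h.μ_zero, h.γ_zero]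
  simp only [zero_add]

theorem energy_succ_add_move_le (h : IsDykstraSeq A B x y μ γ) (w : E) (i : ℕ) :
    dykstraEnergy x y μ γ w (i + 1) + dykstraMove x y (i + 1) ≤ dykstraEnergy x y μ γ w i := by
  have hid := dykstra_energy_identity (x (i + 1)) (y (i + 1)) (x (i + 2)) (y i)
    (μ (i + 1)) (γ (i + 1)) w
  rw [← h.μ_succ, ← h.γ_succ] at hid
  have hμ := h.inner_μ_succ_nonpos i (h.proj_left (i + 1)).1
  have hγ := h.inner_γ_succ_nonpos i (h.proj_right (i + 1)).1
  rw [← neg_sub, inner_neg_right] at hμ hγ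
  simp only [dykstraEnergy, dykstraMove]
  linarith

theorem sq_norm_sub_le_energy (h : IsDykstraSeq A B x y μ γ) (hw : w ∈ A ∩ B) (i : ℕ) :
    ‖x (i + 1) - w‖ ^ 2 ≤ dykstraEnergy x y μ γ w i := by
  have hμ := h.inner_μ_succ_nonpos i hw.1
  have hγ := h.inner_γ_succ_nonpos i hw.2
  rw [← neg_sub, inner_neg_right] at hμ hγ
  simp only [dykstraEnergy]
  linarith

theorem energy_add_sum_move_le (h : IsDykstraSeq A B x y μ γ) (w : E) (n : ℕ) :
    dykstraEnergy x y μ γ w n + ∑ j ∈ Finset.range (n + 1), dykstraMove x y j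
      ≤ ‖x 0 - w‖ ^ 2 := by
  induction n with
  | zero => simp [← h.energy_zero_add_move w]
  | succ n ih =>
    rw [Finset.sum_range_succ]
    linarith [h.energy_succ_add_move_le w n]

theorem energy_nonneg (h : IsDykstraSeq A B x y μ γ) (hw : w ∈ A ∩ B) (i : ℕ) :
    0 ≤ dykstraEnergy x y μ γ w i :=
  (sq_nonneg _).trans (h.sq_norm_sub_le_energy hw i)

theorem energy_antitone (h : IsDykstraSeq A B x y μ γ) (w : E) :
    Antitone (dykstraEnergy x y μ γ w) :=
  antitone_nat_of_succ_le fun i => by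
    linarith [h.energy_succ_add_move_le w i, dykstraMove_nonneg x y (i + 1)]

theorem sum_range_move_le (h : IsDykstraSeq A B x y μ γ) (hw : w ∈ A ∩ B) (n : ℕ) :
    ∑ j ∈ Finset.range n, dykstraMove x y j ≤ ‖x 0 - w‖ ^ 2 := by
  cases n with
  | zero => simp
  | succ n => linarith [h.energy_add_sum_move_le w n, h.energy_nonneg hw n]

theorem norm_x_succ_sub_le (h : IsDykstraSeq A B x y μ γ) (hw : w ∈ A ∩ B) (i : ℕ) :
    ‖x (i + 1) - w‖ ≤ ‖x 0 - w‖ := by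
  refine (pow_le_pow_iff_left₀ (norm_nonneg _) (norm_nonneg _) two_ne_zero).1 ?_
  have hsum : 0 ≤ ∑ j ∈ Finset.range (i + 1), dykstraMove x y j :=
    Finset.sum_nonneg fun j _ => dykstraMove_nonneg x y j
  linarith [h.sq_norm_sub_le_energy hw i, h.energy_add_sum_move_le w i]

theorem summable_move (h : IsDykstraSeq A B x y μ γ) (hw : w ∈ A ∩ B) :
    Summable (dykstraMove x y) :=
  summable_of_sum_range_le (dykstraMove_nonneg x y) (h.sum_range_move_le hw)

theorem tendsto_y_sub_x_succ (h : IsDykstraSeq A B x y μ γ) (hw : w ∈ A ∩ B) :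
    Tendsto (fun i => y i - x (i + 1)) atTop (𝓝 0) :=
  tendsto_zero_of_sq_norm_le (h.summable_move hw).tendsto_atTop_zero
    fun _ => le_add_of_nonneg_left (sq_nonneg _)

theorem tendsto_x_sub_y (h : IsDykstraSeq A B x y μ γ) (hw : w ∈ A ∩ B) :
    Tendsto (fun i => x i - y i) atTop (𝓝 0) :=
  tendsto_zero_of_sq_norm_le (h.summable_move hw).tendsto_atTop_zero
    fun _ => le_add_of_nonneg_right (sq_nonneg _)

theorem sq_norm_μ_le (h : IsDykstraSeq A B x y μ γ) (hw : w ∈ A ∩ B) (n : ℕ) :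
    ‖μ n‖ ^ 2 ≤ n * ‖x 0 - w‖ ^ 2 :=
  calc ‖μ n‖ ^ 2 ≤ (∑ j ∈ Finset.range n, ‖x j - y j‖) ^ 2 := by
        rw [h.μ_eq_sum]; gcongr; exact norm_sum_le _ _
    _ ≤ n * ∑ j ∈ Finset.range n, ‖x j - y j‖ ^ 2 := by
        simpa using sq_sum_le_card_mul_sum_sq (s := Finset.range n) (f := fun j => ‖x j - y j‖)
    _ ≤ n * ‖x 0 - w‖ ^ 2 := by
        gcongr
        exact (Finset.sum_le_sum fun j _ => le_add_of_nonneg_right (sq_nonneg _)).trans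
          (h.sum_range_move_le hw n)

theorem energy_eq (h : IsDykstraSeq A B x y μ γ) (w : E) (i : ℕ) :
    dykstraEnergy x y μ γ w i = ‖x (i + 1) - w‖ ^ 2 + 2 * ⟪μ (i + 1), y i - x (i + 1)⟫
      + 2 * ⟪x 0 - x (i + 1), x (i + 1) - w⟫ := by
  have hy : y i - w = (y i - x (i + 1)) + (x (i + 1) - w) := by abel
  rw [← h.μ_add_γ, dykstraEnergy, hy, inner_add_left, inner_add_right]
  ring

theorem exists_subseq_tendsto [ProperSpace E] (h : IsDykstraSeq A B x y μ γ)
    (hw : w ∈ A ∩ B) :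
    ∃ χ : ℕ → ℕ, StrictMono χ ∧ ∃ z, Tendsto (fun j => x (χ j + 1)) atTop (𝓝 z) ∧
      Tendsto (fun j => ⟪μ (χ j + 1), y (χ j) - x (χ j + 1)⟫) atTop (𝓝 0) := by
  obtain ⟨φ, hφ, hφlim⟩ :=
    (h.summable_move hw).exists_strictMono_tendsto_natCast_succ_mul (dykstraMove_nonneg x y)
  obtain ⟨z, -, ψ, hψ, hz⟩ := tendsto_subseq_of_bounded (Metric.isBounded_closedBall (x := w))
    fun j => mem_closedBall_iff_norm.2 (h.norm_x_succ_sub_le hw (φ j))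
  have hlim := (hφlim.comp hψ.tendsto_atTop).const_mul (‖x 0 - w‖ ^ 2)
  rw [mul_zero] at hlim
  refine ⟨φ ∘ ψ, hφ.comp hψ, z, hz, tendsto_zero_of_sq_norm_le hlim fun j => ?_⟩
  set i := φ (ψ j)
  calc ‖⟪μ (i + 1), y i - x (i + 1)⟫‖ ^ 2 ≤ (‖μ (i + 1)‖ * ‖y i - x (i + 1)‖) ^ 2 := by
        gcongr; exact norm_inner_le_norm _ _
    _ = ‖μ (i + 1)‖ ^ 2 * ‖y i - x (i + 1)‖ ^ 2 := mul_pow _ _ _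
    _ ≤ ((i + 1 : ℕ) * ‖x 0 - w‖ ^ 2) * dykstraMove x y i := by
        gcongr
        · exact h.sq_norm_μ_le hw (i + 1)
        · exact le_add_of_nonneg_left (sq_nonneg _)
    _ = ‖x 0 - w‖ ^ 2 * (((i : ℝ) + 1) * dykstraMove x y i) := by push_cast; ring

theorem mem_inter_of_tendsto (h : IsDykstraSeq A B x y μ γ) (hA : IsClosed A) (hB : IsClosed B)
    (hw : w ∈ A ∩ B) {χ : ℕ → ℕ} (hχ : StrictMono χ) {z : E}
    (hz : Tendsto (fun j => x (χ j + 1)) atTop (𝓝 z)) : z ∈ A ∩ B := by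
  have hy : Tendsto (fun j => y (χ j)) atTop (𝓝 z) := by
    simpa using ((h.tendsto_y_sub_x_succ hw).comp hχ.tendsto_atTop).add hz
  exact ⟨hA.mem_of_tendsto hy (Eventually.of_forall fun j => (h.proj_left _).1),
    hB.mem_of_tendsto hz (Eventually.of_forall fun j => (h.proj_right _).1)⟩

theorem tendsto_energy_zero [ProperSpace E] (h : IsDykstraSeq A B x y μ γ) (hA : IsClosed A)
    (hB : IsClosed B) {p : E} (hp : IsObtuseProj (A ∩ B) (x 0) p) :
    Tendsto (dykstraEnergy x y μ γ p) atTop (𝓝 0) := by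
  obtain ⟨χ, hχ, z, hz, hinner⟩ := h.exists_subseq_tendsto hp.1
  have hzAB := h.mem_inter_of_tendsto hA hB hp.1 hχ hz
  set c := ‖z - p‖ ^ 2 + 2 * 0 + 2 * ⟪x 0 - z, z - p⟫
  have hχlim : Tendsto (fun j => dykstraEnergy x y μ γ p (χ j)) atTop (𝓝 c) := by
    simp_rw [h.energy_eq]
    exact (((hz.sub_const p).norm.pow 2).add (hinner.const_mul 2)).add
      (((tendsto_const_nhds.sub hz).inner (hz.sub_const p)).const_mul 2)
  have hc : c ≤ 0 := by
    have hsplit : ⟪x 0 - z, z - p⟫ = ⟪x 0 - p, z - p⟫ - ‖z - p‖ ^ 2 := by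
      rw [← real_inner_self_eq_norm_sq, ← inner_sub_left, sub_sub_sub_cancel_right]
    simp only [c, hsplit]
    linarith [hp.2 z hzAB, sq_nonneg ‖z - p‖]
  have hinf := tendsto_atTop_ciInf (h.energy_antitone p)
    ⟨0, Set.forall_mem_range.2 (h.energy_nonneg hp.1)⟩
  rw [tendsto_nhds_unique (hinf.comp hχ.tendsto_atTop) hχlim] at hinf
  have hc0 : 0 ≤ c := ge_of_tendsto' hinf (h.energy_nonneg hp.1)
  rwa [le_antisymm hc hc0] at hinf

theorem tendsto [ProperSpace E] (h : IsDykstraSeq A B x y μ γ) (hA : IsClosed A)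
    (hB : IsClosed B) {p : E} (hp : IsObtuseProj (A ∩ B) (x 0) p) :
    Tendsto x atTop (𝓝 p) ∧ Tendsto y atTop (𝓝 p) := by
  have hx : Tendsto x atTop (𝓝 p) := by
    refine (tendsto_add_atTop_iff_nat 1).1 (tendsto_sub_nhds_zero_iff.1 ?_)
    exact tendsto_zero_of_sq_norm_le (h.tendsto_energy_zero hA hB hp)
      (h.sq_norm_sub_le_energy hp.1)
  refine ⟨hx, ?_⟩
  simpa using hx.sub (h.tendsto_x_sub_y hp.1)

end IsDykstraSeq

end Dykstra

theorem convex_setOf_abs_le {E : Type*} [AddCommGroup E] [Module ℝ E] {f : E → ℝ}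
    (hf : IsLinearMap ℝ f) (c : ℝ) : Convex ℝ {u | |f u| ≤ c} := by
  simp only [abs_le, Set.ofPred_and]
  exact (convex_halfSpace_ge hf _).inter (convex_halfSpace_le hf c)

theorem max_le_and_le_min_iff_abs_le {t c a r : ℝ} :
    max (-a) (c - r) ≤ t ∧ t ≤ min a (c + r) ↔ |t - c| ≤ r ∧ |t| ≤ a := by
  simp only [max_le_iff, le_min_iff, abs_le]
  constructor <;> rintro ⟨⟨h1, h2⟩, h3, h4⟩ <;>
    exact ⟨⟨by linarith, by linarith⟩, by linarith, by linarith⟩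

theorem IsProj.isObtuseProj {n : ℕ} {C : Set (EuclideanSpace ℝ (Fin n))}
    {z p : EuclideanSpace ℝ (Fin n)} (hC : Convex ℝ C) (h : IsProj C z p) :
    IsObtuseProj C z p := by
  refine ⟨h.1, (norm_eq_iInf_iff_real_inner_le_zero hC h.1).1 (le_antisymm ?_ ?_)⟩
  · have : Nonempty C := ⟨⟨p, h.1⟩⟩
    exact le_ciInf fun w => by simpa only [dist_eq_norm] using h.2 w w.2
  · exact ciInf_le (f := fun w : C => ‖z - w‖) ⟨0, by rintro _ ⟨w, rfl⟩; positivity⟩ ⟨p, h.1⟩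

section ConstraintSets

variable {N : ℕ} {a r uprev : ℝ}

theorem convex_setOf_abs_apply_le (i : Fin (N + 1)) (c : ℝ) :
    Convex ℝ {u : EuclideanSpace ℝ (Fin (N + 1)) | |u i| ≤ c} :=
  convex_setOf_abs_le (EuclideanSpace.proj i).isLinear c

theorem convex_setOf_abs_apply_sub_le (i j : Fin (N + 1)) (c : ℝ) :
    Convex ℝ {u : EuclideanSpace ℝ (Fin (N + 1)) | |u i - u j| ≤ c} :=
  convex_setOf_abs_le
    (EuclideanSpace.proj i - EuclideanSpace.proj j :
      EuclideanSpace ℝ (Fin (N + 1)) →L[ℝ] ℝ).isLinear c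

theorem convex_pairSet (k : ℕ) (h1 : 1 ≤ k) (h2 : k ≤ N) : Convex ℝ (pairSet N a r k h1 h2) := by
  simp only [pairSet, Set.ofPred_and]
  exact (convex_setOf_abs_apply_le _ _).inter
    ((convex_setOf_abs_apply_le _ _).inter (convex_setOf_abs_apply_sub_le _ _ _))

theorem isClosed_pairSet (k : ℕ) (h1 : 1 ≤ k) (h2 : k ≤ N) :
    IsClosed (pairSet N a r k h1 h2) := by
  simp only [pairSet, Set.ofPred_and]
  exact (isClosed_le (by fun_prop) (by fun_prop)).inter
    ((isClosed_le (by fun_prop) (by fun_prop)).inter (isClosed_le (by fun_prop) (by fun_prop)))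

theorem convex_U1set (hN : 1 ≤ N) : Convex ℝ (U1set N hN a r uprev) := by
  simp only [U1set, Set.ofPred_and]
  exact (convex_halfSpace_ge (EuclideanSpace.proj 0).isLinear _).inter
    ((convex_halfSpace_le (EuclideanSpace.proj 0).isLinear _).inter
      ((convex_setOf_abs_apply_le _ _).inter (convex_setOf_abs_apply_sub_le _ _ _)))

theorem isClosed_U1set (hN : 1 ≤ N) : IsClosed (U1set N hN a r uprev) := by
  simp only [U1set, Set.ofPred_and]
  exact (isClosed_le (by fun_prop) (by fun_prop)).inter
    ((isClosed_le (by fun_prop) (by fun_prop)).inter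
      ((isClosed_le (by fun_prop) (by fun_prop)).inter (isClosed_le (by fun_prop) (by fun_prop))))

theorem convex_evenInter : Convex ℝ (evenInter N a r) :=
  convex_iInter₂ fun _ _ => convex_pairSet _ _ _

theorem isClosed_evenInter : IsClosed (evenInter N a r) :=
  isClosed_iInter fun _ => isClosed_iInter fun _ => isClosed_pairSet _ _ _

theorem convex_oddInter (hN : 1 ≤ N) : Convex ℝ (oddInter N hN a r uprev) :=
  (convex_U1set hN).inter (convex_iInter₂ fun _ _ => convex_pairSet _ _ _)

theorem isClosed_oddInter (hN : 1 ≤ N) : IsClosed (oddInter N hN a r uprev) :=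
  (isClosed_U1set hN).inter
    (isClosed_iInter fun _ => isClosed_iInter fun _ => isClosed_pairSet _ _ _)

variable {u : EuclideanSpace ℝ (Fin (N + 1))}

theorem mem_U1set_iff (hN : 1 ≤ N) :
    u ∈ U1set N hN a r uprev ↔ |u 0 - uprev| ≤ r ∧ u ∈ pairSet N a r 1 le_rfl hN := by
  simp only [U1set, pairSet, Set.mem_ofPred_eq, ← and_assoc, max_le_and_le_min_iff_abs_le]
  -- `u 0` and `u ⟨1 - 1, _⟩` agree definitionally
  rfl

theorem mem_rateAmpSet_iff (hN : 1 ≤ N) : u ∈ rateAmpSet N a r uprev ↔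
    |u 0 - uprev| ≤ r ∧ ∀ k (h1 : 1 ≤ k) (h2 : k ≤ N), u ∈ pairSet N a r k h1 h2 := by
  constructor
  · rintro ⟨hamp, hinit, hrate⟩
    refine ⟨hinit, fun k h1 h2 => ⟨hamp _, hamp _, ?_⟩⟩
    convert hrate ⟨k - 1, by omega⟩ using 4 <;> ext <;> simp; omega
  · rintro ⟨hinit, hpair⟩
    refine ⟨fun ⟨k, hk⟩ => ?_, hinit, fun ⟨k, hk⟩ => (hpair (k + 1) (by omega) hk).2.2⟩
    cases k with
    | zero => exact (hpair 1 le_rfl hN).1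
    | succ k => exact (hpair (k + 1) (by omega) (by omega)).2.1

theorem mem_evenInter_inter_oddInter_iff (hN : 1 ≤ N) :
    u ∈ evenInter N a r ∩ oddInter N hN a r uprev ↔
      |u 0 - uprev| ≤ r ∧ ∀ k (h1 : 1 ≤ k) (h2 : k ≤ N), u ∈ pairSet N a r k h1 h2 := by
  simp only [evenInter, oddInter, Set.mem_inter_iff, Set.mem_iInter, mem_U1set_iff hN]
  constructor
  · rintro ⟨heven, ⟨hinit, hone⟩, hodd⟩
    refine ⟨hinit, fun k hk1 hk2 => ?_⟩
    obtain rfl | hk := eq_or_lt_of_le hk1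
    · exact hone
    · rcases Nat.even_or_odd k with he | ho
      exacts [heven k ⟨he, hk, hk2⟩, hodd k ⟨ho, hk, hk2⟩]
  · rintro ⟨hinit, hpair⟩
    exact ⟨fun k hk => hpair k _ hk.2.2, ⟨hinit, hpair 1 le_rfl hN⟩, fun k hk => hpair k _ hk.2.2⟩

theorem rateAmpSet_eq_inter (hN : 1 ≤ N) :
    rateAmpSet N a r uprev = evenInter N a r ∩ oddInter N hN a r uprev := by
  ext u
  rw [mem_rateAmpSet_iff hN, mem_evenInter_inter_oddInter_iff hN]

end ConstraintSets

theorem dykstra_rateAmpSet_converges_general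
    (N : ℕ) (hN : 1 ≤ N) (a r uprev : ℝ)
    (Pe Po : EuclideanSpace ℝ (Fin (N + 1)) → EuclideanSpace ℝ (Fin (N + 1)))
    (hPe : ∀ z, IsProj (evenInter N a r) z (Pe z))
    (hPo : ∀ z, IsProj (oddInter N hN a r uprev) z (Po z))
    (v0 : EuclideanSpace ℝ (Fin (N + 1)))
    (x y μ γ : ℕ → EuclideanSpace ℝ (Fin (N + 1)))
    (hx0 : x 0 = v0) (hμ0 : μ 0 = 0) (hγ0 : γ 0 = 0)
    (hy : ∀ i, y i = Pe (x i + μ i))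
    (hμ : ∀ i, μ (i + 1) = μ i + x i - y i)
    (hx : ∀ i, x (i + 1) = Po (y i + γ i))
    (hγ : ∀ i, γ (i + 1) = γ i + y i - x (i + 1))
    (pStar : EuclideanSpace ℝ (Fin (N + 1)))
    (hpStar : IsProj (rateAmpSet N a r uprev) v0 pStar) :
    Tendsto x atTop (𝓝 pStar) ∧ Tendsto y atTop (𝓝 pStar) := by
  have hU : rateAmpSet N a r uprev = evenInter N a r ∩ oddInter N hN a r uprev :=
    rateAmpSet_eq_inter hN
  have hdykstra : IsDykstraSeq (evenInter N a r) (oddInter N hN a r uprev) x y μ γ :=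
    { μ_zero := hμ0
      γ_zero := hγ0
      proj_left := fun i => hy i ▸ (hPe _).isObtuseProj convex_evenInter
      proj_right := fun i => hx i ▸ (hPo _).isObtuseProj (convex_oddInter hN)
      μ_succ := hμ
      γ_succ := hγ }
  refine hdykstra.tendsto isClosed_evenInter (isClosed_oddInter hN) ?_
  rw [← hU, hx0]
  exact hpStar.isObtuseProj (hU ▸ convex_evenInter.inter (convex_oddInter hN))

/-- Dykstra's algorithm applied to the splitting `U = U_e ∩ U_o` of the
input rate and amplitude constraint set converges to the Euclidean projection of `v°`
onto `U`. -/
theorem dykstra_rateAmpSet_converges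
    (N : ℕ) (hN : 1 ≤ N) (a r uprev : ℝ) (ha : 0 < a) (hr : 0 < r) (hra : r ≤ 2 * a)
    (huprev : |uprev| ≤ a)
    (Pe Po : EuclideanSpace ℝ (Fin (N + 1)) → EuclideanSpace ℝ (Fin (N + 1)))
    (hPe : ∀ z, IsProj (evenInter N a r) z (Pe z))
    (hPo : ∀ z, IsProj (oddInter N hN a r uprev) z (Po z))
    (v0 : EuclideanSpace ℝ (Fin (N + 1)))
    (x y μ γ : ℕ → EuclideanSpace ℝ (Fin (N + 1)))
    (hx0 : x 0 = v0) (hμ0 : μ 0 = 0) (hγ0 : γ 0 = 0)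
    (hy : ∀ i, y i = Pe (x i + μ i))
    (hμ : ∀ i, μ (i + 1) = μ i + x i - y i)
    (hx : ∀ i, x (i + 1) = Po (y i + γ i))
    (hγ : ∀ i, γ (i + 1) = γ i + y i - x (i + 1))
    (pStar : EuclideanSpace ℝ (Fin (N + 1)))
    (hpStar : IsProj (rateAmpSet N a r uprev) v0 pStar) :
    Tendsto x atTop (𝓝 pStar) ∧ Tendsto y atTop (𝓝 pStar) :=
  dykstra_rateAmpSet_converges_general N hN a r uprev Pe Po hPe hPo v0 x y μ γ hx0 hμ0 hγ0 hy hμ hx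
    hγ pStar hpStar
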